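/- arXiv:2106.06777 — 10 statements merged into one kernel-verified Lean document; each statement's English description precedes it below -/
import Mathlib

section
/- The limit of value iteration is a fixed point of the Bellman operator: the pointwise supremum x* defined by x* q = ⨆ k, (F^[k] 0) q satisfies F x* = x*. (Theorem 1(b),(e): the value-iteration sequence F^[k] 0 is monotone nondecreasing and its limit is a fixed point of F.) -/
/-!
In `ℝ≥0∞`, addition, multiplication by a constant and finite minima all commute with suprema
of increasing sequences, so the Bellman operator is ω-Scott continuous. Kleene's fixed point
theorem then identifies the limit of value iteration from `0 = ⊥` with the least fixed point.
-/

open scoped ENNReal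
open OmegaCompletePartialOrder

section

variable {α : Type*} [OmegaCompletePartialOrder α] {f g : α → ℝ≥0∞}

lemma ωScottContinuous.ennreal_add (hf : ωScottContinuous f) (hg : ωScottContinuous g) :
    ωScottContinuous fun x => f x + g x := by
  refine ωScottContinuous.of_monotone_map_ωSup ⟨hf.monotone.add hg.monotone, fun c => ?_⟩
  rw [hf.map_ωSup, hg.map_ωSup]
  exact ENNReal.iSup_add_iSup_of_monotone (hf.monotone.comp c.monotone)
    (hg.monotone.comp c.monotone)

lemma ωScottContinuous.ennreal_const_mul (hf : ωScottContinuous f) (a : ℝ≥0∞) :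
    ωScottContinuous fun x => a * f x := by
  refine ωScottContinuous.of_monotone_map_ωSup
    ⟨fun _ _ hxy => mul_le_mul_right (hf.monotone hxy) a, fun c => ?_⟩
  rw [hf.map_ωSup]
  exact ENNReal.mul_iSup a _

lemma ωScottContinuous.ennreal_finsetSum {ι : Type*} (s : Finset ι) {f : ι → α → ℝ≥0∞}
    (hf : ∀ i ∈ s, ωScottContinuous (f i)) :
    ωScottContinuous fun x => ∑ i ∈ s, f i x := by
  induction s using Finset.cons_induction with
  | empty => simp only [Finset.sum_empty]; exact ωScottContinuous.const (x := (0 : ℝ≥0∞))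
  | cons i s hi ih =>
    simp only [Finset.sum_cons]
    rw [Finset.forall_mem_cons] at hf
    exact ωScottContinuous.ennreal_add hf.1 (ih hf.2)

end

lemma ωScottContinuous.finset_inf' {α β ι : Type*} [OmegaCompletePartialOrder α]
    [CompleteLinearOrder β] {s : Finset ι} (hs : s.Nonempty) {f : ι → α → β}
    (hf : ∀ i ∈ s, ωScottContinuous (f i)) :
    ωScottContinuous fun x => s.inf' hs (f · x) := by
  induction hs using Finset.Nonempty.cons_induction with
  | singleton i => simpa using hf i (Finset.mem_singleton_self i)
  | cons i s hi hs ih =>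
    simp only [Finset.inf'_cons hs]
    rw [Finset.forall_mem_cons] at hf
    exact CompleteLattice.ωScottContinuous.inf hf.1 (ih hf.2)

theorem ωScottContinuous.map_iSup_iterate_bot {α : Type*} [CompleteLattice α] {f : α → α}
    (hf : ωScottContinuous f) : f (⨆ n, f^[n] ⊥) = ⨆ n, f^[n] ⊥ := by
  let f' : α →o α := ⟨f, hf.monotone⟩
  have h := f'.map_lfp
  rw [fixedPoints.lfp_eq_sSup_iterate f' hf] at h
  exact h

lemma ωScottContinuous_bellman {T Act : Type*} [Fintype T] (A : T → Finset Act)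
    (hA : ∀ q, (A q).Nonempty) (c : T → Act → ℝ≥0∞) (M : T → Act → T → ℝ≥0∞) :
    ωScottContinuous fun (x : T → ℝ≥0∞) q =>
      (A q).inf' (hA q) (fun a => c q a + ∑ q', M q a q' * x q') :=
  ωScottContinuous.of_apply₂ fun q => ωScottContinuous.finset_inf' (hA q) fun a _ =>
    ωScottContinuous.ennreal_add ωScottContinuous.const
      (ωScottContinuous.ennreal_finsetSum _ fun q' _ =>
        ωScottContinuous.ennreal_const_mul (ωScottContinuous.apply q') (M q a q'))

theorem bellman_iterates_lfp_is_fixed_general {T Act : Type*} [Fintype T]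
    (A : T → Finset Act) (hA : ∀ q, (A q).Nonempty)
    (c : T → Act → ℝ≥0∞)
    (M : T → Act → T → ℝ≥0∞)
    (F : (T → ℝ≥0∞) → (T → ℝ≥0∞))
    (hF : ∀ x q, F x q = (A q).inf' (hA q) (fun a => c q a + ∑ q', M q a q' * x q')) :
    F (fun q => ⨆ k, F^[k] 0 q) = fun q => ⨆ k, F^[k] 0 q := by
  have hF_cont : ωScottContinuous F := funext₂ hF ▸ ωScottContinuous_bellman A hA c M
  have h_lim : (fun q => ⨆ k, F^[k] 0 q) = ⨆ k, F^[k] ⊥ := by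
    ext q
    rw [iSup_apply]
    rfl
  rw [h_lim]
  exact ωScottContinuous.map_iSup_iterate_bot hF_cont

/-- Theorem 1(b),(e): the limit of value iteration is a fixed point of the
Bellman operator `F` of a branching Markov decision process. -/
theorem bellman_iterates_lfp_is_fixed {T Act : Type*} [Fintype T] [Nonempty T]
    (A : T → Finset Act) (hA : ∀ q, (A q).Nonempty)
    (c : T → Act → ℝ≥0∞) (hc : ∀ q, ∀ a ∈ A q, 0 < c q a ∧ c q a < ∞)
    (M : T → Act → T → ℝ≥0∞) (hM : ∀ q, ∀ a ∈ A q, ∀ q', M q a q' < ∞)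
    (F : (T → ℝ≥0∞) → (T → ℝ≥0∞))
    (hF : ∀ x q, F x q = (A q).inf' (hA q) (fun a => c q a + ∑ q', M q a q' * x q')) :
    F (fun q => ⨆ k, F^[k] 0 q) = fun q => ⨆ k, F^[k] 0 q :=
  bellman_iterates_lfp_is_fixed_general A hA c M F hF
end

section
/- Essential uniqueness of the Bellman fixed point (Theorem 2, finite case): if x : T → ℝ≥0∞ satisfies F x = x and x q < ∞ for every q : T, then x = x*, where x* q = ⨆ k, (F^[k] 0) q is the least fixed point of F. -/
/-!
The operator `F` is ω-Scott-continuous (a finite minimum of affine maps with nonnegative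
coefficients), so by Kleene's theorem `y = ⨆ k, F^[k] 0` is its least fixed point and `y ≤ x`.
Conversely, costs are positive, so `y > 0`, and `r = max_q x q / y q` is finite and attained at
some `q₀`. Taking an action `a` optimal for `y` at `q₀` and `S = ∑ q', M q₀ a q' * y q' < ∞`,
`r * c + r * S = r * y q₀ = x q₀ ≤ c + ∑ q', M q₀ a q' * x q' ≤ c + r * S`, so `r * c ≤ c` and
`r ≤ 1` because `0 < c < ∞`. Hence `x ≤ r * y ≤ y`.
-/

open scoped ENNReal
open OmegaCompletePartialOrder

lemma CompleteLattice.ωScottContinuous.finset_inf'_apply {ι α β : Type*}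
    [OmegaCompletePartialOrder α] [CompleteLinearOrder β] {s : Finset ι} (hs : s.Nonempty)
    {f : ι → α → β} (hf : ∀ i ∈ s, ωScottContinuous (f i)) :
    ωScottContinuous fun x => s.inf' hs (f · x) := by
  induction hs using Finset.Nonempty.cons_induction with
  | singleton i => exact hf i (Finset.mem_singleton_self i)
  | cons i s hi hs ih =>
    convert CompleteLattice.ωScottContinuous.inf (hf i (Finset.mem_cons_self i s))
      (ih fun j hj => hf j (Finset.mem_cons_of_mem hj)) using 1
    ext x
    exact Finset.inf'_cons ..

lemma ENNReal.ωScottContinuous_add_sum_mul {T : Type*} [Fintype T] (b : ℝ≥0∞) (m : T → ℝ≥0∞) :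
    ωScottContinuous fun x : T → ℝ≥0∞ => b + ∑ i, m i * x i := by
  have hmono : Monotone fun x : T → ℝ≥0∞ => b + ∑ i, m i * x i := fun x y hxy => by
    dsimp only; gcongr with i; exact hxy i
  refine ωScottContinuous.of_monotone_map_ωSup ⟨hmono, fun ch => ?_⟩
  change b + ∑ i, m i * (⨆ k, ch k i) = ⨆ k, b + ∑ i, m i * ch k i
  simp_rw [ENNReal.mul_iSup]
  rw [ENNReal.finsetSum_iSup_of_monotone (f := fun i k => m i * ch k i)
    fun i k l hkl => mul_le_mul_right (ch.mono hkl i) _, ENNReal.add_iSup]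

theorem ENNReal.exists_forall_le_mul_and_eq_mul {T : Type*} [Finite T] [Nonempty T] {x y : T → ℝ≥0∞}
    (hx : ∀ q, x q ≠ ∞) (hy₀ : ∀ q, y q ≠ 0) (hy : ∀ q, y q ≠ ∞) :
    ∃ r ≠ ∞, ∃ q₀, (∀ q, x q ≤ r * y q) ∧ x q₀ = r * y q₀ := by
  obtain ⟨q₀, hq₀⟩ := Finite.exists_max fun q => x q / y q
  have hdiv (q : T) : x q = x q / y q * y q := (ENNReal.div_mul_cancel (hy₀ q) (hy q)).symm
  refine ⟨x q₀ / y q₀, ENNReal.div_ne_top (hx q₀) (hy₀ q₀), q₀, fun q => ?_, hdiv q₀⟩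
  calc x q = x q / y q * y q := hdiv q
    _ ≤ x q₀ / y q₀ * y q := mul_le_mul_left (hq₀ q) _

noncomputable section Bellman

variable {T Act : Type*} [Fintype T] (A : T → Finset Act) (hA : ∀ q, (A q).Nonempty)
  (c : T → Act → ℝ≥0∞) (M : T → Act → T → ℝ≥0∞)

def bellman (x : T → ℝ≥0∞) (q : T) : ℝ≥0∞ :=
  (A q).inf' (hA q) fun a => c q a + ∑ q', M q a q' * x q'

theorem ωScottContinuous_bellman_s4 : ωScottContinuous (bellman A hA c M) :=
  ωScottContinuous.of_apply₂ fun q =>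
    CompleteLattice.ωScottContinuous.finset_inf'_apply (hA q) fun a _ =>
      ENNReal.ωScottContinuous_add_sum_mul (c q a) (M q a)

def bellmanHom : (T → ℝ≥0∞) →o (T → ℝ≥0∞) :=
  ⟨bellman A hA c M, (ωScottContinuous_bellman_s4 A hA c M).monotone⟩

theorem bellmanHom_lfp_apply (q : T) :
    (bellmanHom A hA c M).lfp q = ⨆ k, (bellman A hA c M)^[k] 0 q := by
  rw [fixedPoints.lfp_eq_sSup_iterate _ (ωScottContinuous_bellman_s4 A hA c M), iSup_apply]
  rfl

theorem exists_mem_bellman_eq (x : T → ℝ≥0∞) (q : T) :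
    ∃ a ∈ A q, bellman A hA c M x q = c q a + ∑ q', M q a q' * x q' :=
  Finset.exists_mem_eq_inf' (hA q) _

variable {A hA c M}

theorem bellman_le (x : T → ℝ≥0∞) {q : T} {a : Act} (ha : a ∈ A q) :
    bellman A hA c M x q ≤ c q a + ∑ q', M q a q' * x q' :=
  Finset.inf'_le _ ha

theorem bellman_pos (hc : ∀ q, ∀ a ∈ A q, 0 < c q a) (x : T → ℝ≥0∞) (q : T) :
    0 < bellman A hA c M x q :=
  (Finset.lt_inf'_iff _).2 fun a ha => (hc q a ha).trans_le le_self_add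

theorem le_one_of_le_mul_of_eq_mul (hc : ∀ q, ∀ a ∈ A q, 0 < c q a ∧ c q a < ∞)
    (hM : ∀ q, ∀ a ∈ A q, ∀ q', M q a q' < ∞) {x y : T → ℝ≥0∞}
    (hx : x ≤ bellman A hA c M x) (hy : bellman A hA c M y ≤ y) (hyfin : ∀ q, y q ≠ ∞)
    {r : ℝ≥0∞} (hr : r ≠ ∞) {q₀ : T} (hle : ∀ q, x q ≤ r * y q) (heq : x q₀ = r * y q₀) :
    r ≤ 1 := by
  obtain ⟨a, ha, hya⟩ := exists_mem_bellman_eq A hA c M y q₀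
  set S := ∑ q', M q₀ a q' * y q'
  have hS : r * S ≠ ∞ := ENNReal.mul_ne_top hr <| ENNReal.sum_ne_top.2 fun q' _ =>
    ENNReal.mul_ne_top (hM q₀ a ha q').ne (hyfin q')
  have hrc : r * c q₀ a + r * S ≤ c q₀ a + r * S :=
    calc r * c q₀ a + r * S = r * bellman A hA c M y q₀ := by rw [hya, mul_add]
      _ ≤ x q₀ := heq ▸ mul_le_mul_right (hy q₀) r
      _ ≤ c q₀ a + ∑ q', M q₀ a q' * x q' := (hx q₀).trans (bellman_le x ha)
      _ ≤ c q₀ a + ∑ q', M q₀ a q' * (r * y q') := by gcongr with q'; exact hle q'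
      _ = c q₀ a + r * S := by simp only [S, Finset.mul_sum, mul_left_comm]
  refine (ENNReal.mul_le_mul_iff_left (hc q₀ a ha).1.ne' (hc q₀ a ha).2.ne).1 ?_
  rw [one_mul]
  exact ENNReal.le_of_add_le_add_right hS hrc

theorem le_of_le_bellman_of_bellman_le (hc : ∀ q, ∀ a ∈ A q, 0 < c q a ∧ c q a < ∞)
    (hM : ∀ q, ∀ a ∈ A q, ∀ q', M q a q' < ∞) {x y : T → ℝ≥0∞}
    (hx : x ≤ bellman A hA c M x) (hy : bellman A hA c M y ≤ y)
    (hxfin : ∀ q, x q ≠ ∞) (hyfin : ∀ q, y q ≠ ∞) : x ≤ y := by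
  intro q
  have : Nonempty T := ⟨q⟩
  have hypos (q : T) : y q ≠ 0 :=
    ((bellman_pos (fun q a ha => (hc q a ha).1) y q).trans_le (hy q)).ne'
  obtain ⟨r, hr, q₀, hle, heq⟩ := ENNReal.exists_forall_le_mul_and_eq_mul hxfin hypos hyfin
  calc x q ≤ r * y q := hle q
    _ ≤ 1 * y q := by gcongr; exact le_one_of_le_mul_of_eq_mul hc hM hx hy hyfin hr hle heq
    _ = y q := one_mul _

end Bellman

theorem bellman_fixed_point_unique_general {T Act : Type*} [Fintype T]
    (A : T → Finset Act) (hA : ∀ q, (A q).Nonempty)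
    (c : T → Act → ℝ≥0∞) (hc : ∀ q, ∀ a ∈ A q, 0 < c q a ∧ c q a < ∞)
    (M : T → Act → T → ℝ≥0∞) (hM : ∀ q, ∀ a ∈ A q, ∀ q', M q a q' < ∞)
    (F : (T → ℝ≥0∞) → (T → ℝ≥0∞))
    (hF : ∀ x q, F x q = (A q).inf' (hA q) (fun a => c q a + ∑ q', M q a q' * x q'))
    (x : T → ℝ≥0∞) (hx : F x = x) (hfin : ∀ q, x q < ∞) :
    x = fun q => ⨆ k, F^[k] 0 q := by
  obtain rfl : F = bellman A hA c M := funext fun x => funext (hF x)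
  set y := (bellmanHom A hA c M).lfp
  have hyx : y ≤ x := OrderHom.lfp_le_fixed _ hx
  have hxy : x ≤ y := le_of_le_bellman_of_bellman_le hc hM hx.ge (bellmanHom A hA c M).map_lfp.le
    (fun q => (hfin q).ne) fun q => ((hyx q).trans_lt (hfin q)).ne
  funext q
  rw [← bellmanHom_lfp_apply, le_antisymm hxy hyx]

/-- Theorem 2 (finite case): essential uniqueness of the Bellman fixed point.
Any everywhere-finite fixed point of `F` equals the least fixed point. -/
theorem bellman_fixed_point_unique {T Act : Type*} [Fintype T] [Nonempty T]
    (A : T → Finset Act) (hA : ∀ q, (A q).Nonempty)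
    (c : T → Act → ℝ≥0∞) (hc : ∀ q, ∀ a ∈ A q, 0 < c q a ∧ c q a < ∞)
    (M : T → Act → T → ℝ≥0∞) (hM : ∀ q, ∀ a ∈ A q, ∀ q', M q a q' < ∞)
    (F : (T → ℝ≥0∞) → (T → ℝ≥0∞))
    (hF : ∀ x q, F x q = (A q).inf' (hA q) (fun a => c q a + ∑ q', M q a q' * x q'))
    (x : T → ℝ≥0∞) (hx : F x = x) (hfin : ∀ q, x q < ∞) :
    x = fun q => ⨆ k, F^[k] 0 q :=
  bellman_fixed_point_unique_general A hA c hc M hM F hF x hx hfin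
end

section
/- Essential uniqueness for branching Markov chains (Theorem 2, affine case, coordinatewise): if x : T → ℝ≥0∞ satisfies x = B *ᵥ x + c (i.e. x q = ∑_{q'} B q q' * x q' + c q for all q) and x q < ∞ for some particular q : T, then x q = (∑' k, (B^k *ᵥ c)) q, the q-th entry of the least fixed point of y ↦ B *ᵥ y + c. -/
open scoped ENNReal
open Matrix

/-- Theorem 2 (affine case, coordinatewise): for a branching Markov chain with
expected-offspring matrix `B` and positive cost vector `c`, any fixed point of
`x ↦ B *ᵥ x + c` that is finite at a coordinate `q` agrees at `q` with the
least fixed point `∑' k, B ^ k *ᵥ c`. -/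
theorem bmc_fixed_point_unique {T : Type*} [Fintype T] [Nonempty T] [DecidableEq T]
    (B : Matrix T T ℝ≥0∞) (c : T → ℝ≥0∞) (hc : ∀ q, 0 < c q)
    (x : T → ℝ≥0∞) (hx : ∀ q, x q = (B *ᵥ x) q + c q)
    (q : T) (hq : x q < ∞) :
    x q = (∑' k : ℕ, (B ^ k) *ᵥ c) q := by
  have hx' : x = B *ᵥ x + c := funext hx
  -- key unfolding identity
  have key : ∀ n : ℕ,
      x = (∑ k ∈ Finset.range n, (B ^ k) *ᵥ c) + (B ^ n) *ᵥ x := by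
    intro n
    induction n with
    | zero => simp [Matrix.one_mulVec]
    | succ n ih =>
      calc x = B *ᵥ x + c := hx'
        _ = B *ᵥ ((∑ k ∈ Finset.range n, (B ^ k) *ᵥ c) + (B ^ n) *ᵥ x) + c := by
            rw [← ih]
        _ = (∑ k ∈ Finset.range (n + 1), (B ^ k) *ᵥ c) + (B ^ (n + 1)) *ᵥ x := by
            rw [Matrix.mulVec_add, Matrix.mulVec_mulVec, ← pow_succ']
            have hs : B *ᵥ (∑ k ∈ Finset.range n, (B ^ k) *ᵥ c)
                = ∑ k ∈ Finset.range n, (B ^ (k + 1)) *ᵥ c := by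
              rw [show B *ᵥ (∑ k ∈ Finset.range n, (B ^ k) *ᵥ c)
                  = B.mulVecLin (∑ k ∈ Finset.range n, (B ^ k) *ᵥ c) from rfl,
                map_sum]
              simp [Matrix.mulVecLin_apply, Matrix.mulVec_mulVec, pow_succ']
            rw [hs, Finset.sum_range_succ']
            simp only [pow_zero, Matrix.one_mulVec]
            abel
  have keyq : ∀ n : ℕ,
      x q = (∑ k ∈ Finset.range n, ((B ^ k) *ᵥ c) q) + ((B ^ n) *ᵥ x) q := by
    intro n
    have := congrFun (key n) q
    simpa [Finset.sum_apply] using this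
  -- lower bound: tsum ≤ x q
  have hle1 : (∑' k : ℕ, ((B ^ k) *ᵥ c) q) ≤ x q := by
    refine ENNReal.tsum_le_of_sum_range_le fun n => ?_
    rw [keyq n]; exact le_self_add
  have htsum_ne : (∑' k : ℕ, ((B ^ k) *ᵥ c) q) ≠ ∞ := (hle1.trans_lt hq).ne
  -- finite constant K with x q' ≤ K * c q' wherever x is finite
  set K : ℝ≥0∞ :=
    (Finset.univ.sup fun q' => (if x q' = ∞ then 0 else x q') / c q') ⊔ 1 with hKdef
  have hK_ne : K ≠ ∞ := by
    have hlt : K < ⊤ := by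
      rw [hKdef]
      refine sup_lt_iff.mpr ⟨?_, ENNReal.one_lt_top⟩
      refine Finset.sup_lt_iff (by simp) |>.mpr fun q' _ => ?_
      refine ENNReal.div_lt_top ?_ (hc q').ne'
      split <;> [exact ENNReal.zero_ne_top; assumption]
    exact hlt.ne
  have hK1 : (1 : ℝ≥0∞) ≤ K := le_sup_right
  have hxK : ∀ q', x q' ≠ ∞ → x q' ≤ K * c q' := by
    intro q' hq'
    by_cases hcq : c q' = ∞
    · rw [hcq, ENNReal.mul_top (by positivity : (0:ℝ≥0∞) < K).ne']
      exact le_top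
    · have h1 : x q' / c q' ≤ K := by
        refine le_trans ?_ (le_sup_left : _ ≤ K)
        have := Finset.le_sup (f := fun q' => (if x q' = ∞ then 0 else x q') / c q')
          (Finset.mem_univ q')
        simpa [hq'] using this
      calc x q' = x q' / c q' * c q' := (ENNReal.div_mul_cancel (hc q').ne' hcq).symm
        _ ≤ K * c q' := mul_le_mul_left h1 _
  -- bound (B^n *ᵥ x) q by K * (B^n *ᵥ c) q
  have hfin : ∀ n, ((B ^ n) *ᵥ x) q ≠ ∞ := by
    intro n
    intro h
    rw [keyq n, h, add_top] at hq
    exact (lt_irrefl _) hq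
  have hbound : ∀ n, ((B ^ n) *ᵥ x) q ≤ K * ((B ^ n) *ᵥ c) q := by
    intro n
    have hterm : ∀ q' ∈ Finset.univ, (B ^ n) q q' * x q' < ∞ := by
      rw [← ENNReal.sum_lt_top]
      exact lt_top_iff_ne_top.2 (hfin n)
    show ∑ q', (B ^ n) q q' * x q' ≤ K * ((B ^ n) *ᵥ c) q
    rw [show ((B ^ n) *ᵥ c) q = ∑ q', (B ^ n) q q' * c q' from rfl, Finset.mul_sum]
    refine Finset.sum_le_sum fun q' _ => ?_
    by_cases hB : (B ^ n) q q' = 0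
    · simp [hB]
    · have hx' : x q' ≠ ∞ := by
        intro hxi
        have := hterm q' (Finset.mem_univ q')
        rw [hxi, ENNReal.mul_top hB] at this
        exact lt_irrefl _ this
      calc (B ^ n) q q' * x q' ≤ (B ^ n) q q' * (K * c q') :=
            mul_le_mul_right (hxK q' hx') _
        _ = K * ((B ^ n) q q' * c q') := by ring
  -- (B^n *ᵥ c) q → 0
  have htend : Filter.Tendsto (fun n => ((B ^ n) *ᵥ c) q) Filter.atTop (nhds 0) :=
    ENNReal.tendsto_atTop_zero_of_tsum_ne_top htsum_ne
  have htend2 : Filter.Tendsto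
      (fun n => (∑' k : ℕ, ((B ^ k) *ᵥ c) q) + K * ((B ^ n) *ᵥ c) q)
      Filter.atTop (nhds ((∑' k : ℕ, ((B ^ k) *ᵥ c) q))) := by
    have := (ENNReal.Tendsto.const_mul htend (Or.inr hK_ne)).const_add
      (∑' k : ℕ, ((B ^ k) *ᵥ c) q)
    simpa using this
  have hle2 : x q ≤ ∑' k : ℕ, ((B ^ k) *ᵥ c) q := by
    refine ge_of_tendsto' htend2 fun n => ?_
    rw [keyq n]
    exact add_le_add (ENNReal.sum_le_tsum _) (hbound n)
  rw [ENNReal.tsum_apply]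
  exact le_antisymm hle2 hle1
end

section
/- Lemma 3 (fixed-factor lemma): there exists a constant μ > 0 such that for every Q : Fin n → ℝ with Q q ≥ c* q for all q and (B.mulVec Q + c) q ≤ Q q for all q, one has ∑_q (Q q − (B.mulVec Q + c) q) ≥ μ * ∑_q (Q q − c* q). -/
open Filter Matrix

lemma pow_entry_nonneg' {n : ℕ} (B : Matrix (Fin n) (Fin n) ℝ) (hB : ∀ i j, 0 ≤ B i j) :
    ∀ k i j, 0 ≤ (B ^ k) i j := by
  intro k
  induction k with
  | zero =>
    intro i j
    simp only [pow_zero, Matrix.one_apply]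
    split <;> norm_num
  | succ k ih =>
    intro i j
    rw [pow_succ, Matrix.mul_apply]
    exact Finset.sum_nonneg fun l _ => mul_nonneg (ih i l) (hB l j)

/-- Lemma 3 (fixed-factor lemma): there is a constant `μ > 0` such that for
every `Q ≥ c*` with `T Q = B *ᵥ Q + c ≤ Q`, the total gap between `Q` and its
target `T Q` is at least `μ` times the total gap between `Q` and `c*`. -/
theorem fixed_factor_lemma {n : ℕ}
    (B : Matrix (Fin n) (Fin n) ℝ) (hB : ∀ i j, 0 ≤ B i j)
    (hpow : ∀ i j, Tendsto (fun k => (B ^ k) i j) atTop (nhds 0))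
    (c : Fin n → ℝ) (hc : ∀ i, 0 < c i)
    (cstar : Fin n → ℝ) (hcstar : cstar = B.mulVec cstar + c) :
    ∃ μ : ℝ, 0 < μ ∧
      ∀ Q : Fin n → ℝ, (∀ q, cstar q ≤ Q q) →
        (∀ q, (B.mulVec Q + c) q ≤ Q q) →
        μ * ∑ q, (Q q - cstar q) ≤ ∑ q, (Q q - (B.mulVec Q + c) q) := by
  set ε : ℝ := 1 / (2 * (n + 1)) with hεdef
  have hεpos : (0:ℝ) < ε := by positivity
  have hev : ∀ᶠ k in atTop, ∀ i j, (B ^ k) i j < ε := by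
    rw [eventually_all]
    intro i
    rw [eventually_all]
    intro j
    exact (hpow i j).eventually_lt_const hεpos
  obtain ⟨k0, hk0⟩ := hev.exists
  set A : Matrix (Fin n) (Fin n) ℝ := ∑ k ∈ Finset.range k0, B ^ k with hAdef
  have hAnn : ∀ i j, 0 ≤ A i j := by
    intro i j
    have : A i j = ∑ k ∈ Finset.range k0, (B ^ k) i j := by
      rw [hAdef]; simp [Matrix.sum_apply]
    rw [this]
    exact Finset.sum_nonneg fun k _ => pow_entry_nonneg' B hB k i j
  set C : ℝ := (∑ q, ∑ j, A q j) + 1 with hCdef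
  have hCpos : 0 < C := by
    have : 0 ≤ ∑ q, ∑ j, A q j :=
      Finset.sum_nonneg fun q _ => Finset.sum_nonneg fun j _ => hAnn q j
    linarith
  have hcol : ∀ j, ∑ q, A q j ≤ C := by
    intro j
    have h1 : ∑ q, A q j ≤ ∑ q, ∑ j', A q j' := by
      apply Finset.sum_le_sum
      intro q _
      exact Finset.single_le_sum (fun j' _ => hAnn q j') (Finset.mem_univ j)
    linarith
  -- matrix identity A * (1 - B) = 1 - B ^ k0
  have hAB : A * (1 - B) = 1 - B ^ k0 := by
    have h := geom_sum_mul B k0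
    have : A * (1 - B) = -((∑ k ∈ Finset.range k0, B ^ k) * (B - 1)) := by
      rw [hAdef]; noncomm_ring
    rw [this, h]; noncomm_ring
  refine ⟨1 / (2 * C), by positivity, ?_⟩
  intro Q hQc hTQ
  set d : Fin n → ℝ := fun q => Q q - cstar q with hddef
  set v : Fin n → ℝ := fun q => Q q - (B.mulVec Q + c) q with hvdef
  have hdnn : ∀ q, 0 ≤ d q := fun q => sub_nonneg.2 (hQc q)
  have hvnn : ∀ q, 0 ≤ v q := fun q => sub_nonneg.2 (hTQ q)
  have hvd : ∀ q, v q = d q - B.mulVec d q := by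
    intro q
    have hBc : B.mulVec cstar q = cstar q - c q := by
      have := congrFun hcstar q
      simp only [Pi.add_apply] at this
      linarith
    have hBd : B.mulVec d q = B.mulVec Q q - B.mulVec cstar q := by
      have : d = Q - cstar := rfl
      rw [this, Matrix.mulVec_sub, Pi.sub_apply]
    simp only [hvdef, hddef, Pi.add_apply]
    rw [hBd, hBc]
    ring
  -- key decomposition : d = A *ᵥ v + (B ^ k0) *ᵥ d
  have hdec : ∀ q, d q = A.mulVec v q + (B ^ k0).mulVec d q := by
    intro q
    have h1 : v = (1 - B).mulVec d := by
      funext q'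
      rw [Matrix.sub_mulVec, Matrix.one_mulVec, Pi.sub_apply]
      exact hvd q'
    have h2 : A.mulVec v = (1 - B ^ k0).mulVec d := by
      rw [h1, Matrix.mulVec_mulVec, hAB]
    have := congrFun h2 q
    rw [Matrix.sub_mulVec, Matrix.one_mulVec, Pi.sub_apply] at this
    linarith
  -- sum bounds
  set S : ℝ := ∑ q, d q with hSdef
  set V : ℝ := ∑ q, v q with hVdef
  have hsum1 : ∑ q, A.mulVec v q ≤ C * V := by
    have : ∑ q, A.mulVec v q = ∑ j, (∑ q, A q j) * v j := by
      simp only [Matrix.mulVec, dotProduct]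
      rw [Finset.sum_comm]
      simp [Finset.sum_mul]
    rw [this, hVdef, Finset.mul_sum]
    exact Finset.sum_le_sum fun j _ => mul_le_mul_of_nonneg_right (hcol j) (hvnn j)
  have hnε : (n : ℝ) * ε ≤ 1 / 2 := by
    rw [hεdef, mul_one_div, div_le_div_iff₀ (by positivity) (by norm_num)]
    push_cast
    nlinarith [Nat.cast_nonneg (α := ℝ) n]
  have hsum2 : ∑ q, (B ^ k0).mulVec d q ≤ (1 / 2) * S := by
    have heq : ∑ q, (B ^ k0).mulVec d q = ∑ j, (∑ q, (B ^ k0) q j) * d j := by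
      simp only [Matrix.mulVec, dotProduct]
      rw [Finset.sum_comm]
      simp [Finset.sum_mul]
    rw [heq, hSdef, Finset.mul_sum]
    apply Finset.sum_le_sum
    intro j _
    have hcol2 : ∑ q, (B ^ k0) q j ≤ (n : ℝ) * ε := by
      calc ∑ q, (B ^ k0) q j ≤ ∑ _q : Fin n, ε :=
            Finset.sum_le_sum fun q _ => (hk0 q j).le
        _ = (n : ℝ) * ε := by simp [mul_comm]
    calc (∑ q, (B ^ k0) q j) * d j ≤ ((n : ℝ) * ε) * d j :=
          mul_le_mul_of_nonneg_right hcol2 (hdnn j)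
      _ ≤ (1 / 2) * d j := mul_le_mul_of_nonneg_right hnε (hdnn j)
  have hS : S ≤ C * V + (1 / 2) * S := by
    calc S = ∑ q, A.mulVec v q + ∑ q, (B ^ k0).mulVec d q := by
          rw [hSdef, ← Finset.sum_add_distrib]
          exact Finset.sum_congr rfl fun q _ => hdec q
      _ ≤ C * V + (1 / 2) * S := add_le_add hsum1 hsum2
  show 1 / (2 * C) * S ≤ V
  clear_value S V C
  rw [one_div, inv_mul_le_iff₀ (by positivity)]
  have h2 : (1 / 2) * S ≤ C * V := by linarith
  nlinarith [h2, mul_assoc (2:ℝ) C V]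
end

section
/- Core of Lemma 3 (homogeneous linear-programming form): if B is an entrywise-nonnegative real n×n matrix whose powers tend to zero entrywise, then there exists μ > 0 such that for every x : Fin n → ℝ with x q ≥ 0 for all q and (B.mulVec x) q ≤ x q for all q, one has ∑_q (x q − (B.mulVec x) q) ≥ μ * ∑_q x q. -/
open Filter Matrix

/-- Core of Lemma 3 (homogeneous linear-programming form): if the powers of the
entrywise-nonnegative matrix `B` tend to zero entrywise, then there is `μ > 0`
such that every nonnegative vector `x` with `B *ᵥ x ≤ x` satisfies
`∑ q (x q - (B *ᵥ x) q) ≥ μ * ∑ q x q`. -/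
theorem fixed_factor_lemma_core {n : ℕ}
    (B : Matrix (Fin n) (Fin n) ℝ) (hB : ∀ i j, 0 ≤ B i j)
    (hpow : ∀ i j, Tendsto (fun k => (B ^ k) i j) atTop (nhds 0)) :
    ∃ μ : ℝ, 0 < μ ∧
      ∀ x : Fin n → ℝ, (∀ q, 0 ≤ x q) → (∀ q, (B.mulVec x) q ≤ x q) →
        μ * ∑ q, x q ≤ ∑ q, (x q - (B.mulVec x) q) := by
  classical
  have hpownn : ∀ k i j, 0 ≤ (B ^ k) i j := by
    intro k
    induction k with
    | zero =>
      intro i j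
      simp only [pow_zero, Matrix.one_apply]
      split <;> norm_num
    | succ m ih =>
      intro i j
      rw [pow_succ, Matrix.mul_apply]
      exact Finset.sum_nonneg fun l _ => mul_nonneg (ih i l) (hB l j)
  have hT : Tendsto (fun k => ∑ i, ∑ j, (B ^ k) i j) atTop (nhds 0) := by
    have := tendsto_finset_sum Finset.univ
      (fun i (_ : i ∈ Finset.univ) => tendsto_finset_sum Finset.univ
        (fun j (_ : j ∈ Finset.univ) => hpow i j))
    simpa using this
  obtain ⟨k, hk⟩ := (hT.eventually (gt_mem_nhds (by norm_num : (0:ℝ) < 1/2))).exists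
  set C : ℝ := ∑ j ∈ Finset.range k, ∑ i, ∑ l, (B ^ j) i l with hCdef
  have hC0 : 0 ≤ C :=
    Finset.sum_nonneg fun j _ => Finset.sum_nonneg fun i _ =>
      Finset.sum_nonneg fun l _ => hpownn j i l
  refine ⟨1 / (2 * (C + 1)), by positivity, ?_⟩
  intro x hx hBx
  set y : Fin n → ℝ := fun q => x q - B.mulVec x q with hy
  have hynn : ∀ q, 0 ≤ y q := fun q => sub_nonneg.2 (hBx q)
  have hSy : 0 ≤ ∑ q, y q := Finset.sum_nonneg fun q _ => hynn q
  have hSx : 0 ≤ ∑ q, x q := Finset.sum_nonneg fun q _ => hx q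
  -- bound on sums of powers applied to a nonneg vector
  have hbound : ∀ (j : ℕ) (v : Fin n → ℝ), (∀ q, 0 ≤ v q) →
      ∑ q, ((B ^ j).mulVec v) q ≤ (∑ i, ∑ l, (B ^ j) i l) * ∑ q, v q := by
    intro j v hv
    rw [Finset.sum_mul]
    refine Finset.sum_le_sum fun q _ => ?_
    rw [Matrix.mulVec, Finset.sum_mul]
    refine Finset.sum_le_sum fun l _ => ?_
    exact mul_le_mul_of_nonneg_left
      (Finset.single_le_sum (fun r _ => hv r) (Finset.mem_univ l)) (hpownn j q l)
  have htail : ∑ q, ((B ^ k).mulVec x) q ≤ (1/2) * ∑ q, x q := by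
    calc ∑ q, ((B ^ k).mulVec x) q ≤ (∑ i, ∑ l, (B ^ k) i l) * ∑ q, x q :=
          hbound k x hx
      _ ≤ (1/2) * ∑ q, x q := mul_le_mul_of_nonneg_right (le_of_lt hk) hSx
  have hstep : ∀ j : ℕ, ∑ q, ((B ^ j).mulVec y) q
      = (∑ q, ((B ^ j).mulVec x) q) - ∑ q, ((B ^ (j+1)).mulVec x) q := by
    intro j
    rw [pow_succ, ← Matrix.mulVec_mulVec, ← Finset.sum_sub_distrib]
    refine Finset.sum_congr rfl fun q _ => ?_
    have : y = x - B.mulVec x := by funext r; simp [hy]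
    rw [this, Matrix.mulVec_sub]
    simp
  have tel : ∑ j ∈ Finset.range k, ∑ q, ((B ^ j).mulVec y) q
      = ∑ q, x q - ∑ q, ((B ^ k).mulVec x) q := by
    rw [Finset.sum_congr rfl (fun j _ => hstep j), Finset.sum_range_sub'
      (f := fun j => ∑ q, ((B ^ j).mulVec x) q)]
    simp
  have h1 : ∑ q, x q - ∑ q, ((B ^ k).mulVec x) q ≤ C * ∑ q, y q := by
    rw [← tel, hCdef, Finset.sum_mul]
    exact Finset.sum_le_sum fun j _ => hbound j y hynn
  have hgoal : ∑ q, (x q - (B.mulVec x) q) = ∑ q, y q := rfl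
  rw [hgoal]
  have h2 : ∑ q, x q ≤ 2 * (C + 1) * ∑ q, y q := by nlinarith [htail, h1, hSy]
  rw [div_mul_eq_mul_div, one_mul, div_le_iff₀ (by positivity : (0:ℝ) < 2 * (C + 1))]
  linarith [mul_le_mul_of_nonneg_right h2 (le_of_lt (by positivity : (0:ℝ) < 1))]
end

section
/- Lemma 1 (monotone decrease from above): if the initial expected Q-vector is Q_0 = κ • c* for a scalar κ ≥ 1, then for every i : ℕ one has, entrywise, c* ≤ B.mulVec Q_i + c ≤ Q_{i+1} ≤ Q_i (i.e. the expected Q-values form a nonincreasing sequence bounded below by c*, and each target T(Q_i) = B.mulVec Q_i + c lies between c* and Q_{i+1}). -/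
open Filter Matrix

/-- Lemma 1 (monotone decrease from above): starting from `Q 0 = κ • c*` with
`κ ≥ 1`, the expected Q-learning iterates satisfy, entrywise,
`c* ≤ B *ᵥ Q i + c ≤ Q (i+1) ≤ Q i` for all `i`. -/
theorem expected_q_values_decrease {n : ℕ}
    (B : Matrix (Fin n) (Fin n) ℝ) (hB : ∀ i j, 0 ≤ B i j)
    (hpow : ∀ i j, Tendsto (fun k => (B ^ k) i j) atTop (nhds 0))
    (c : Fin n → ℝ) (hc : ∀ i, 0 < c i)
    (cstar : Fin n → ℝ) (hcstar : cstar = B.mulVec cstar + c)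
    (lam : ℕ → ℝ) (hlam : ∀ i, 0 ≤ lam i ∧ lam i ≤ 1)
    (p : Fin n → ℝ) (hp : ∀ q, 0 < p q ∧ p q ≤ 1)
    (Q : ℕ → Fin n → ℝ)
    (hQ : ∀ i q, Q (i + 1) q
      = (1 - lam i * p q) * Q i q + lam i * p q * (B.mulVec (Q i) + c) q)
    (κ : ℝ) (hκ : 1 ≤ κ) (hQ0 : Q 0 = κ • cstar) :
    ∀ i q, cstar q ≤ (B.mulVec (Q i) + c) q
      ∧ (B.mulVec (Q i) + c) q ≤ Q (i + 1) q
      ∧ Q (i + 1) q ≤ Q i q := by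
  -- monotonicity of mulVec for entrywise nonneg matrices
  have hmono : ∀ (M : Matrix (Fin n) (Fin n) ℝ), (∀ i j, 0 ≤ M i j) →
      ∀ x y : Fin n → ℝ, (∀ j, x j ≤ y j) → ∀ q, M.mulVec x q ≤ M.mulVec y q := by
    intro M hM x y hxy q
    simp only [Matrix.mulVec, dotProduct]
    exact Finset.sum_le_sum fun j _ => mul_le_mul_of_nonneg_left (hxy j) (hM q j)
  have hBk : ∀ k i j, 0 ≤ (B ^ k) i j := by
    intro k
    induction k with
    | zero =>
      intro i j
      rw [pow_zero]
      by_cases h : i = j <;> simp [Matrix.one_apply, h]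
    | succ k ih =>
      intro i j
      rw [pow_succ, Matrix.mul_apply]
      exact Finset.sum_nonneg fun l _ => mul_nonneg (ih i l) (hB l j)
  have hBc : ∀ j, B.mulVec cstar j ≤ cstar j := by
    intro j
    nth_rewrite 2 [hcstar]
    simp only [Pi.add_apply, le_add_iff_nonneg_right]
    exact (hc j).le
  have hle : ∀ k q, ((B ^ k).mulVec cstar) q ≤ cstar q := by
    intro k
    induction k with
    | zero => intro q; simp
    | succ k ih =>
      intro q
      calc ((B ^ (k + 1)).mulVec cstar) q
          = ((B ^ k).mulVec (B.mulVec cstar)) q := by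
            rw [pow_succ, ← Matrix.mulVec_mulVec]
        _ ≤ ((B ^ k).mulVec cstar) q := hmono _ (hBk k) _ _ hBc q
        _ ≤ cstar q := ih q
  have hcstar0 : ∀ q, 0 ≤ cstar q := by
    intro q
    have htend : Tendsto (fun k => ((B ^ k).mulVec cstar) q) atTop (nhds 0) := by
      have h : Tendsto (fun k => ∑ j, (B ^ k) q j * cstar j) atTop
          (nhds (∑ j : Fin n, 0)) :=
        tendsto_finset_sum _ fun j _ => by
          simpa using (hpow q j).mul_const (cstar j)
      simpa [Matrix.mulVec, dotProduct] using h
    exact le_of_tendsto htend (Eventually.of_forall fun k => hle k q)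
  -- the key invariant
  have main : ∀ i, (∀ q, cstar q ≤ Q i q) ∧ (∀ q, (B.mulVec (Q i) + c) q ≤ Q i q) := by
    intro i
    induction i with
    | zero =>
      constructor
      · intro q
        rw [hQ0]
        simp only [Pi.smul_apply, smul_eq_mul]
        nlinarith [hcstar0 q]
      · intro q
        rw [hQ0, Matrix.mulVec_smul]
        simp only [Pi.add_apply, Pi.smul_apply, smul_eq_mul]
        have heq : cstar q = (B.mulVec cstar) q + c q := by
          nth_rewrite 1 [hcstar]; simp
        nlinarith [hc q]
    | succ i ih =>
      obtain ⟨h1, h2⟩ := ih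
      have hlp : ∀ q, 0 ≤ lam i * p q ∧ lam i * p q ≤ 1 := by
        intro q
        constructor
        · exact mul_nonneg (hlam i).1 (hp q).1.le
        · calc lam i * p q ≤ 1 * 1 :=
              mul_le_mul (hlam i).2 (hp q).2 (hp q).1.le zero_le_one
            _ = 1 := by ring
      have hmid : ∀ q, (B.mulVec (Q i) + c) q ≤ Q (i + 1) q ∧ Q (i + 1) q ≤ Q i q := by
        intro q
        rw [hQ i q]
        constructor <;> nlinarith [h2 q, (hlp q).1, (hlp q).2]
      have hQle : ∀ q, Q (i + 1) q ≤ Q i q := fun q => (hmid q).2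
      constructor
      · intro q
        have : cstar q ≤ (B.mulVec (Q i) + c) q := by
          nth_rewrite 1 [hcstar]
          simp only [Pi.add_apply]
          have := hmono B hB cstar (Q i) h1 q
          linarith
        exact this.trans (hmid q).1
      · intro q
        have hB1 : B.mulVec (Q (i + 1)) q ≤ B.mulVec (Q i) q :=
          hmono B hB _ _ hQle q
        have := (hmid q).1
        simp only [Pi.add_apply] at this ⊢
        linarith
  intro i q
  obtain ⟨h1, h2⟩ := main i
  have hlp : 0 ≤ lam i * p q ∧ lam i * p q ≤ 1 := by
    constructor
    · exact mul_nonneg (hlam i).1 (hp q).1.le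
    · calc lam i * p q ≤ 1 * 1 :=
          mul_le_mul (hlam i).2 (hp q).2 (hp q).1.le zero_le_one
        _ = 1 := by ring
  refine ⟨?_, ?_, ?_⟩
  · nth_rewrite 1 [hcstar]
    simp only [Pi.add_apply]
    have := hmono B hB cstar (Q i) h1 q
    linarith
  · rw [hQ i q]; nlinarith [h2 q, hlp.1, hlp.2]
  · rw [hQ i q]; nlinarith [h2 q, hlp.1, hlp.2]
end

section
/- Lemma 2 (monotone increase from below): if the initial expected Q-vector is Q_0 = κ • c* for a scalar κ with 0 ≤ κ ≤ 1, then for every i : ℕ one has, entrywise, c* ≥ B.mulVec Q_i + c ≥ Q_{i+1} ≥ Q_i (i.e. the expected Q-values form a nondecreasing sequence bounded above by c*, and each target T(Q_i) = B.mulVec Q_i + c lies between Q_{i+1} and c*). -/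
open Filter Matrix

/-- Lemma 2 (monotone increase from below): starting from `Q 0 = κ • c*` with
`0 ≤ κ ≤ 1`, the expected Q-learning iterates satisfy, entrywise,
`c* ≥ B *ᵥ Q i + c ≥ Q (i+1) ≥ Q i` for all `i`. -/
theorem expected_q_values_increase {n : ℕ}
    (B : Matrix (Fin n) (Fin n) ℝ) (hB : ∀ i j, 0 ≤ B i j)
    (hpow : ∀ i j, Tendsto (fun k => (B ^ k) i j) atTop (nhds 0))
    (c : Fin n → ℝ) (hc : ∀ i, 0 < c i)
    (cstar : Fin n → ℝ) (hcstar : cstar = B.mulVec cstar + c)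
    (lam : ℕ → ℝ) (hlam : ∀ i, 0 ≤ lam i ∧ lam i ≤ 1)
    (p : Fin n → ℝ) (hp : ∀ q, 0 < p q ∧ p q ≤ 1)
    (Q : ℕ → Fin n → ℝ)
    (hQ : ∀ i q, Q (i + 1) q
      = (1 - lam i * p q) * Q i q + lam i * p q * (B.mulVec (Q i) + c) q)
    (κ : ℝ) (hκ0 : 0 ≤ κ) (hκ1 : κ ≤ 1) (hQ0 : Q 0 = κ • cstar) :
    ∀ i q, (B.mulVec (Q i) + c) q ≤ cstar q
      ∧ Q (i + 1) q ≤ (B.mulVec (Q i) + c) q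
      ∧ Q i q ≤ Q (i + 1) q := by
  -- monotonicity of mulVec
  have hmono : ∀ x y : Fin n → ℝ, (∀ q, x q ≤ y q) →
      ∀ q, (B.mulVec x) q ≤ (B.mulVec y) q := by
    intro x y hxy q
    simp only [mulVec, dotProduct]
    exact Finset.sum_le_sum fun j _ =>
      mul_le_mul_of_nonneg_left (hxy j) (hB q j)
  have hBpow : ∀ (k : ℕ) (q j : Fin n), 0 ≤ (B ^ k) q j := by
    intro k
    induction k with
    | zero => intro q j; rcases eq_or_ne q j with h | h <;> simp [Matrix.one_apply, h]
    | succ k ihk =>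
      intro q j
      rw [pow_succ, Matrix.mul_apply]
      exact Finset.sum_nonneg fun m _ => mul_nonneg (ihk q m) (hB m j)
  -- telescoping: cstar = B^N cstar + ∑_{k<N} B^k c
  have htel : ∀ N : ℕ, cstar =
      (B ^ N).mulVec cstar + ∑ k ∈ Finset.range N, (B ^ k).mulVec c := by
    intro N
    induction N with
    | zero => simp [Matrix.one_mulVec]
    | succ N ih =>
      nth_rewrite 1 [ih]
      rw [Finset.sum_range_succ]
      have : (B ^ N).mulVec cstar
          = (B ^ (N + 1)).mulVec cstar + (B ^ N).mulVec c := by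
        nth_rewrite 1 [hcstar]
        rw [Matrix.mulVec_add, Matrix.mulVec_mulVec, ← pow_succ]
      rw [this]
      abel
  -- cstar nonneg
  have hcs0 : ∀ q, 0 ≤ cstar q := by
    intro q
    have hle : ∀ N : ℕ, ((B ^ N).mulVec cstar) q ≤ cstar q := by
      intro N
      have := congrFun (htel N) q
      have hsum : 0 ≤ (∑ k ∈ Finset.range N, (B ^ k).mulVec c) q := by
        have : (∑ k ∈ Finset.range N, (B ^ k).mulVec c) q
            = ∑ k ∈ Finset.range N, ((B ^ k).mulVec c) q := by
          simp
        rw [this]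
        refine Finset.sum_nonneg fun k _ => ?_
        simp only [mulVec, dotProduct]
        exact Finset.sum_nonneg fun j _ => mul_nonneg (hBpow k q j) (hc j).le
      have := this
      simp only [Pi.add_apply] at this
      linarith
    have htend : Tendsto (fun N => ((B ^ N).mulVec cstar) q) atTop (nhds 0) := by
      have : ∀ N, ((B ^ N).mulVec cstar) q = ∑ j, (B ^ N) q j * cstar j := by
        intro N; rfl
      simp only [this]
      have h0 : (0 : ℝ) = ∑ j : Fin n, 0 * cstar j := by simp
      rw [h0]
      exact tendsto_finset_sum _ fun j _ => (hpow q j).mul_const (cstar j)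
    exact le_of_tendsto htend (Eventually.of_forall hle)
  -- fixed point
  have hfix : ∀ q, (B.mulVec cstar + c) q = cstar q := by
    intro q; exact (congrFun hcstar q).symm
  -- main invariant by induction: Q i ≤ cstar and Q i ≤ T (Q i)
  have key : ∀ i, (∀ q, Q i q ≤ cstar q) ∧
      (∀ q, Q i q ≤ (B.mulVec (Q i) + c) q) := by
    intro i
    induction i with
    | zero =>
      constructor
      · intro q
        rw [hQ0]; simp only [Pi.smul_apply, smul_eq_mul]
        nlinarith [hcs0 q]
      · intro q
        rw [hQ0]
        simp only [Pi.add_apply, Pi.smul_apply, smul_eq_mul, Matrix.mulVec_smul]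
        have h1 : κ * (B.mulVec cstar) q + c q
            = κ * cstar q + (1 - κ) * c q := by
          have := hfix q
          simp only [Pi.add_apply] at this
          nlinarith [this]
        nlinarith [h1, (hc q).le]
    | succ i ih =>
      obtain ⟨ih1, ih2⟩ := ih
      have hTle : ∀ q, (B.mulVec (Q i) + c) q ≤ cstar q := by
        intro q
        have := hmono (Q i) cstar ih1 q
        have h2 := hfix q
        simp only [Pi.add_apply] at h2 ⊢
        linarith
      have hstep : ∀ q, Q i q ≤ Q (i + 1) q ∧ Q (i + 1) q ≤ (B.mulVec (Q i) + c) q := by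
        intro q
        have hl := hlam i
        have hpq := hp q
        have hlp0 : 0 ≤ lam i * p q := mul_nonneg hl.1 hpq.1.le
        have hlp1 : lam i * p q ≤ 1 := by nlinarith [hl.1, hl.2, hpq.1.le, hpq.2]
        have hT := ih2 q
        rw [hQ i q]
        constructor <;> nlinarith
      constructor
      · intro q; exact le_trans (hstep q).2 (hTle q)
      · intro q
        have hQmono : ∀ r, Q i r ≤ Q (i + 1) r := fun r => (hstep r).1
        have := hmono (Q i) (Q (i + 1)) hQmono q
        have h2 := (hstep q).2
        simp only [Pi.add_apply] at h2 ⊢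
        linarith
  intro i q
  obtain ⟨h1, h2⟩ := key i
  have hTle : (B.mulVec (Q i) + c) q ≤ cstar q := by
    have := hmono (Q i) cstar h1 q
    have h2' := hfix q
    simp only [Pi.add_apply] at h2' ⊢
    linarith
  have hl := hlam i
  have hpq := hp q
  have hlp0 : 0 ≤ lam i * p q := mul_nonneg hl.1 hpq.1.le
  have hlp1 : lam i * p q ≤ 1 := by nlinarith [hl.1, hl.2, hpq.1.le, hpq.2]
  have hT := h2 q
  refine ⟨hTle, ?_, ?_⟩ <;> rw [hQ i q] <;> nlinarith
end

section
/- Per-step contraction of the expected Q-values (key inequality in the proof of Lemma 4): suppose additionally that p q ≥ p_min for all q for some p_min > 0, and that Q_0 = κ • c* with κ ≥ 1. Then there exists μ > 0 (independent of i) such that for every i : ℕ, ∑_q (Q_{i+1} q − c* q) ≤ (1 − μ * p_min * λ i) * ∑_q (Q_i q − c* q). -/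
open Filter Matrix

/-!
Write `r = Q - (B Q + c)` for the Bellman residual. The update moves `Q` by `-λ p r`, which
turns the residual into `(1 - λ p) r + λ B (p r)`; starting from `κ • c*` the residual is
`(κ - 1) c ≥ 0`, so it stays nonnegative. Since `B^k → 0`, the matrix `1 - B` is invertible and
there are weights `y` with `yᵀ (1 - B) = 1`, so the total gap is `∑ (Q - c*) = y ⬝ r ≤ M ∑ r`
for any bound `M` on the weights. One step lowers the total gap by `λ ∑ p r ≥ λ p_min ∑ r`,
hence by at least `λ p_min / M` times the gap: take `μ = 1 / M`.
-/

namespace Matrix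

variable {ι 𝕜 : Type*} [Fintype ι] [DecidableEq ι]

theorem vecMul_pow_eq_self {R : Type*} [Semiring R] {B : Matrix ι ι R} {x : ι → R}
    (hx : x ᵥ* B = x) (k : ℕ) : x ᵥ* B ^ k = x := by
  induction k with
  | zero => exact vecMul_one x
  | succ k ih => rw [pow_succ, ← vecMul_vecMul, ih, hx]

theorem sum_eq_dotProduct_one_sub_mulVec {R : Type*} [CommRing R] {B : Matrix ι ι R}
    {y : ι → R} (hy : y ᵥ* (1 - B) = 1) (v : ι → R) : ∑ i, v i = y ⬝ᵥ (v - B *ᵥ v) := by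
  rw [← one_dotProduct, ← hy, ← dotProduct_mulVec, sub_mulVec, one_mulVec]

variable [Field 𝕜] [TopologicalSpace 𝕜] [IsTopologicalRing 𝕜] [T2Space 𝕜]

theorem eq_zero_of_vecMul_eq_self_of_tendsto_pow {B : Matrix ι ι 𝕜}
    (hB : Tendsto (fun k : ℕ => B ^ k) atTop (nhds 0)) {x : ι → 𝕜} (hx : x ᵥ* B = x) :
    x = 0 := by
  have hlim : Tendsto (fun k : ℕ => x ᵥ* B ^ k) atTop (nhds (x ᵥ* 0)) :=
    ((continuous_const.matrix_vecMul continuous_id).tendsto 0).comp hB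
  simp only [vecMul_pow_eq_self hx, vecMul_zero] at hlim
  exact tendsto_nhds_unique tendsto_const_nhds hlim

theorem isUnit_one_sub_of_tendsto_pow {B : Matrix ι ι 𝕜}
    (hB : Tendsto (fun k : ℕ => B ^ k) atTop (nhds 0)) : IsUnit (1 - B) := by
  rw [← vecMul_injective_iff_isUnit]
  intro x x' hxx'
  have hfix : (x - x') ᵥ* B = x - x' := by
    simp only [vecMul_sub, vecMul_one, sub_vecMul] at hxx' ⊢
    linear_combination -hxx'
  exact sub_eq_zero.1 (eq_zero_of_vecMul_eq_self_of_tendsto_pow hB hfix)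

end Matrix

section Bellman

variable {ι : Type*} [Fintype ι] (B : Matrix ι ι ℝ) (c : ι → ℝ)

def bellmanResidual (x : ι → ℝ) : ι → ℝ := x - (B *ᵥ x + c)

variable {B c}

theorem bellmanResidual_sub (x u : ι → ℝ) :
    bellmanResidual B c (x - u) = bellmanResidual B c x - (u - B *ᵥ u) := by
  simp only [bellmanResidual, mulVec_sub]
  abel

theorem bellmanResidual_eq_sub_mulVec {cstar : ι → ℝ} (hcstar : cstar = B *ᵥ cstar + c)
    (x : ι → ℝ) :
    bellmanResidual B c x = (x - cstar) - B *ᵥ (x - cstar) := by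
  obtain rfl : c = cstar - B *ᵥ cstar := eq_sub_of_add_eq' hcstar.symm
  simp only [bellmanResidual, mulVec_sub]
  abel

theorem bellmanResidual_smul_fixedPoint {cstar : ι → ℝ} (hcstar : cstar = B *ᵥ cstar + c)
    (κ : ℝ) : bellmanResidual B c (κ • cstar) = (κ - 1) • c := by
  obtain rfl : c = cstar - B *ᵥ cstar := eq_sub_of_add_eq' hcstar.symm
  simp only [bellmanResidual, mulVec_smul]
  module

theorem bellmanResidual_step_nonneg (hB : ∀ i j, 0 ≤ B i j) {s x : ι → ℝ}
    (hs₀ : 0 ≤ s) (hs₁ : s ≤ 1) (hx : 0 ≤ bellmanResidual B c x) :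
    0 ≤ bellmanResidual B c (x - s * bellmanResidual B c x) := by
  set r := bellmanResidual B c x
  have hsr : 0 ≤ s * r := mul_nonneg hs₀ hx
  have hBsr : 0 ≤ B *ᵥ (s * r) := fun i =>
    Finset.sum_nonneg fun j _ => mul_nonneg (hB i j) (hsr j)
  have hrest : 0 ≤ (1 - s) * r := mul_nonneg (sub_nonneg.2 hs₁) hx
  rw [bellmanResidual_sub]
  calc (0 : ι → ℝ) ≤ (1 - s) * r + B *ᵥ (s * r) := add_nonneg hrest hBsr
    _ = r - (s * r - B *ᵥ (s * r)) := by ring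

theorem sum_sub_fixedPoint_eq_dotProduct_bellmanResidual [DecidableEq ι] {cstar y : ι → ℝ}
    (hcstar : cstar = B *ᵥ cstar + c) (hy : y ᵥ* (1 - B) = 1) (x : ι → ℝ) :
    ∑ q, (x q - cstar q) = y ⬝ᵥ bellmanResidual B c x := by
  rw [bellmanResidual_eq_sub_mulVec hcstar]
  exact sum_eq_dotProduct_one_sub_mulVec hy (x - cstar)

theorem sum_sub_fixedPoint_step_le [DecidableEq ι] {cstar y p x : ι → ℝ} {lam pmin M : ℝ}
    (hcstar : cstar = B *ᵥ cstar + c) (hy : y ᵥ* (1 - B) = 1) (hyM : ∀ q, y q ≤ M)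
    (hM : 0 < M) (hpmin : 0 ≤ pmin) (hp : ∀ q, pmin ≤ p q) (hlam : 0 ≤ lam)
    (hx : 0 ≤ bellmanResidual B c x) :
    ∑ q, ((x - lam • (p * bellmanResidual B c x)) q - cstar q)
      ≤ (1 - M⁻¹ * pmin * lam) * ∑ q, (x q - cstar q) := by
  set r := bellmanResidual B c x
  have hgap : ∑ q, (x q - cstar q) = y ⬝ᵥ r :=
    sum_sub_fixedPoint_eq_dotProduct_bellmanResidual hcstar hy x
  have hdrop : ∑ q, ((x - lam • (p * r)) q - cstar q)
      = ∑ q, (x q - cstar q) - lam * ∑ q, p q * r q := by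
    simp only [Pi.sub_apply, Pi.smul_apply, Pi.mul_apply, smul_eq_mul, Finset.mul_sum,
      ← Finset.sum_sub_distrib]
    exact Finset.sum_congr rfl fun q _ => by ring
  have hgap_le : M⁻¹ * pmin * (y ⬝ᵥ r) ≤ ∑ q, p q * r q :=
    calc M⁻¹ * pmin * (y ⬝ᵥ r) ≤ M⁻¹ * pmin * (M * ∑ q, r q) := by
          gcongr
          rw [Finset.mul_sum]
          exact Finset.sum_le_sum fun q _ => mul_le_mul_of_nonneg_right (hyM q) (hx q)
      _ = ∑ q, pmin * r q := by field_simp; rw [Finset.mul_sum]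
      _ ≤ ∑ q, p q * r q :=
          Finset.sum_le_sum fun q _ => mul_le_mul_of_nonneg_right (hp q) (hx q)
  rw [hdrop, hgap]
  nlinarith [mul_le_mul_of_nonneg_left hgap_le hlam]

end Bellman

/-- Per-step contraction of the expected Q-values (key inequality in the proof
of Lemma 4): if each entry is updated with probability at least `p_min > 0` and
`Q 0 = κ • c*` with `κ ≥ 1`, there is `μ > 0` such that the total gap to `c*`
shrinks by the factor `1 - μ * p_min * λ i` at each step `i`. -/
theorem expected_q_values_contraction {n : ℕ}
    (B : Matrix (Fin n) (Fin n) ℝ) (hB : ∀ i j, 0 ≤ B i j)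
    (hpow : ∀ i j, Tendsto (fun k => (B ^ k) i j) atTop (nhds 0))
    (c : Fin n → ℝ) (hc : ∀ i, 0 < c i)
    (cstar : Fin n → ℝ) (hcstar : cstar = B.mulVec cstar + c)
    (lam : ℕ → ℝ) (hlam : ∀ i, 0 ≤ lam i ∧ lam i ≤ 1)
    (p : Fin n → ℝ) (hp : ∀ q, 0 < p q ∧ p q ≤ 1)
    (pmin : ℝ) (hpmin : 0 < pmin) (hppmin : ∀ q, pmin ≤ p q)
    (Q : ℕ → Fin n → ℝ)
    (hQ : ∀ i q, Q (i + 1) q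
      = (1 - lam i * p q) * Q i q + lam i * p q * (B.mulVec (Q i) + c) q)
    (κ : ℝ) (hκ : 1 ≤ κ) (hQ0 : Q 0 = κ • cstar) :
    ∃ μ : ℝ, 0 < μ ∧
      ∀ i, ∑ q, (Q (i + 1) q - cstar q)
        ≤ (1 - μ * pmin * lam i) * ∑ q, (Q i q - cstar q) := by
  have hstep (i : ℕ) : Q (i + 1) = Q i - lam i • (p * bellmanResidual B c (Q i)) := by
    funext q
    simp only [hQ, bellmanResidual, Pi.sub_apply, Pi.smul_apply, Pi.mul_apply, smul_eq_mul]
    ring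
  have hres (i : ℕ) : 0 ≤ bellmanResidual B c (Q i) := by
    induction i with
    | zero =>
      rw [hQ0, bellmanResidual_smul_fixedPoint hcstar]
      exact smul_nonneg (sub_nonneg.2 hκ) fun q => (hc q).le
    | succ i ih =>
      rw [hstep, ← smul_mul_assoc]
      exact bellmanResidual_step_nonneg hB (fun q => mul_nonneg (hlam i).1 (hp q).1.le)
        (fun q => mul_le_one₀ (hlam i).2 (hp q).1.le (hp q).2) ih
  have hBpow : Tendsto (fun k => B ^ k) atTop (nhds 0) :=
    tendsto_pi_nhds.2 fun i => tendsto_pi_nhds.2 (hpow i)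
  obtain ⟨y, hy⟩ := vecMul_surjective_iff_isUnit.2 (isUnit_one_sub_of_tendsto_pow hBpow) 1
  obtain ⟨M, hM, hyM⟩ : ∃ M > 0, ∀ q, y q ≤ M :=
    ⟨∑ q, |y q| + 1, by positivity, fun q => (le_abs_self _).trans <|
      (Finset.single_le_sum (fun r _ => abs_nonneg (y r)) (Finset.mem_univ q)).trans
        (le_add_of_nonneg_right zero_le_one)⟩
  refine ⟨M⁻¹, inv_pos.2 hM, fun i => ?_⟩
  rw [hstep i]
  exact sum_sub_fixedPoint_step_le hcstar hy hyM hM hpmin.le hppmin (hlam i).1 (hres i)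
end

section
/- Lemma 4 (convergence of the expected Q-values from scalar multiples of c*): suppose additionally that p q ≥ p_min for all q for some p_min > 0, that ∑_i λ i = ∞ (the series of learning rates diverges), and that Q_0 = κ • c* for some scalar κ ≥ 0. Then the expected Q-learning iterates converge to the fixed point: Q_i q → c* q as i → ∞, for every q. -/
/-!
Write `e i = Q i - c*`. Since `c* = B c* + c` with `c > 0` and `c* ≥ 0`, some `δ > 0` satisfies
`B c* ≤ (1 - δ) c*`, so entrywise bounds of the form `|e| ≤ m c*` are contracted by `B`.
If `|e i| ≤ m c*`, the update gives
`|e (i+1) q| ≤ m (1 - λ i p q δ) c* q ≤ m exp (-p_min δ λ i) c* q`.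
Starting from `|e 0| = |κ - 1| c*`, the bound decays like `exp (-p_min δ ∑ j < i, λ j) → 0`.
-/

open Filter Matrix Topology Finset

namespace Matrix

variable {ι : Type*} [Fintype ι] {B : Matrix ι ι ℝ}

theorem mulVec_nonneg_of_nonneg (hB : ∀ i j, 0 ≤ B i j) {v : ι → ℝ} (hv : 0 ≤ v) :
    0 ≤ B *ᵥ v :=
  fun i => Finset.sum_nonneg fun j _ => mul_nonneg (hB i j) (hv j)

theorem mulVec_le_mulVec_of_nonneg (hB : ∀ i j, 0 ≤ B i j) {v w : ι → ℝ} (hvw : v ≤ w) :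
    B *ᵥ v ≤ B *ᵥ w := by
  have := mulVec_nonneg_of_nonneg hB (sub_nonneg.2 hvw)
  rwa [mulVec_sub, sub_nonneg] at this

theorem abs_mulVec_le_of_abs_le (hB : ∀ i j, 0 ≤ B i j) {e y : ι → ℝ}
    (he : ∀ j, |e j| ≤ y j) (i : ι) : |(B *ᵥ e) i| ≤ (B *ᵥ y) i := by
  have hlow : B *ᵥ (-y) ≤ B *ᵥ e :=
    mulVec_le_mulVec_of_nonneg hB fun j => neg_le_of_abs_le (he j)
  have hupp : B *ᵥ e ≤ B *ᵥ y := mulVec_le_mulVec_of_nonneg hB fun j => le_of_abs_le (he j)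
  rw [mulVec_neg] at hlow
  exact abs_le.2 ⟨hlow i, hupp i⟩

/-- Since `x ≥ B *ᵥ x` and `B` is monotone, `x ≥ B ^ N *ᵥ x` for every `N`; let `N → ∞`. -/
theorem nonneg_of_eq_mulVec_add [DecidableEq ι] (hB : ∀ i j, 0 ≤ B i j)
    (hpow : Tendsto (fun k : ℕ => B ^ k) atTop (𝓝 0)) {x c : ι → ℝ} (hc : 0 ≤ c)
    (hx : x = B *ᵥ x + c) : 0 ≤ x := by
  have hdom : ∀ N, B ^ N *ᵥ x ≤ x := by
    intro N
    induction N with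
    | zero => simp
    | succ N ih =>
      calc B ^ (N + 1) *ᵥ x = B *ᵥ (B ^ N *ᵥ x) := by rw [pow_succ', mulVec_mulVec]
        _ ≤ B *ᵥ x := mulVec_le_mulVec_of_nonneg hB ih
        _ ≤ x := by nth_rewrite 2 [hx]; exact le_add_of_nonneg_right hc
  have hlim : Tendsto (fun N => B ^ N *ᵥ x) atTop (𝓝 0) := by
    have hcont : Continuous fun M : Matrix ι ι ℝ => M *ᵥ x :=
      continuous_id.matrix_mulVec continuous_const
    have := (hcont.tendsto 0).comp hpow
    rwa [zero_mulVec] at this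
  exact le_of_tendsto' hlim hdom

end Matrix

theorem exists_pos_smul_le {ι : Type*} [Finite ι] {c : ι → ℝ} (hc : ∀ i, 0 < c i)
    (x : ι → ℝ) : ∃ δ : ℝ, 0 < δ ∧ δ • x ≤ c := by
  have hsmall : ∀ i, ∀ᶠ δ in 𝓝[>] (0 : ℝ), δ * x i < c i := fun i =>
    nhdsWithin_le_nhds <| (continuous_id.mul continuous_const).tendsto' 0 0 (zero_mul _)
      |>.eventually (gt_mem_nhds (hc i))
  obtain ⟨δ, hδ, hle⟩ :=
    ((eventually_mem_nhdsWithin (s := Set.Ioi 0)).and (eventually_all.2 hsmall)).exists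
  exact ⟨δ, hδ, fun i => (hle i).le⟩

section ExpectedQLearning

variable {ι : Type*} [Fintype ι] {B : Matrix ι ι ℝ}

theorem abs_relaxed_mulVec_le (hB : ∀ i j, 0 ≤ B i j) {x e : ι → ℝ} {δ m w : ℝ}
    (hBx : B *ᵥ x ≤ (1 - δ) • x) (hm : 0 ≤ m) (he : ∀ j, |e j| ≤ m * x j)
    (hw0 : 0 ≤ w) (hw1 : w ≤ 1) (q : ι) :
    |(1 - w) * e q + w * (B *ᵥ e) q| ≤ m * (1 - w * δ) * x q := by
  have hBe : |(B *ᵥ e) q| ≤ m * ((1 - δ) * x q) :=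
    calc |(B *ᵥ e) q| ≤ (B *ᵥ (m • x)) q := abs_mulVec_le_of_abs_le hB he q
      _ = m * (B *ᵥ x) q := by rw [mulVec_smul]; rfl
      _ ≤ m * ((1 - δ) * x q) := mul_le_mul_of_nonneg_left (hBx q) hm
  have hcompl : 0 ≤ 1 - w := sub_nonneg.2 hw1
  calc |(1 - w) * e q + w * (B *ᵥ e) q| ≤ (1 - w) * |e q| + w * |(B *ᵥ e) q| := by
        simpa only [abs_mul, abs_of_nonneg hw0, abs_of_nonneg hcompl] using
          abs_add_le ((1 - w) * e q) (w * (B *ᵥ e) q)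
    _ ≤ (1 - w) * (m * x q) + w * (m * ((1 - δ) * x q)) := by gcongr; exact he q
    _ = m * (1 - w * δ) * x q := by ring

theorem abs_sub_le_exp_neg_sum (hB : ∀ i j, 0 ≤ B i j) {c x : ι → ℝ}
    (hfix : x = B *ᵥ x + c) (hx : 0 ≤ x) {δ : ℝ} (hδ : 0 ≤ δ)
    (hBx : B *ᵥ x ≤ (1 - δ) • x) {lam : ℕ → ℝ} (hlam : ∀ i, 0 ≤ lam i ∧ lam i ≤ 1)
    {p : ι → ℝ} (hp : ∀ q, 0 ≤ p q ∧ p q ≤ 1) {pmin : ℝ} (hppmin : ∀ q, pmin ≤ p q)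
    {Q : ℕ → ι → ℝ}
    (hQ : ∀ i q, Q (i + 1) q = (1 - lam i * p q) * Q i q + lam i * p q * (B *ᵥ Q i + c) q)
    {m : ℝ} (hm : 0 ≤ m) (h0 : ∀ q, |Q 0 q - x q| ≤ m * x q) (i : ℕ) (q : ι) :
    |Q i q - x q| ≤ m * Real.exp (-(pmin * δ * ∑ j ∈ range i, lam j)) * x q := by
  induction i generalizing q with
  | zero => simpa using h0 q
  | succ i ih =>
    set w := lam i * p q
    have hw0 : 0 ≤ w := mul_nonneg (hlam i).1 (hp q).1
    have hw1 : w ≤ 1 := mul_le_one₀ (hlam i).2 (hp q).1 (hp q).2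
    have herr : Q (i + 1) q - x q = (1 - w) * (Q i q - x q) + w * (B *ᵥ (Q i - x)) q := by
      have hxq := congrFun hfix q
      simp only [Pi.add_apply] at hxq
      rw [hQ, mulVec_sub]
      simp only [Pi.sub_apply, Pi.add_apply]
      linear_combination (-w) * hxq
    have hdecay : 1 - w * δ ≤ Real.exp (-(pmin * δ * lam i)) :=
      calc 1 - w * δ ≤ 1 - pmin * δ * lam i := by
            have := mul_le_mul_of_nonneg_left (hppmin q) (hlam i).1
            nlinarith [mul_le_mul_of_nonneg_right this hδ]
        _ ≤ Real.exp (-(pmin * δ * lam i)) := by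
            linarith [Real.add_one_le_exp (-(pmin * δ * lam i))]
    calc |Q (i + 1) q - x q|
        = |(1 - w) * (Q i q - x q) + w * (B *ᵥ (Q i - x)) q| := by rw [herr]
      _ ≤ m * Real.exp (-(pmin * δ * ∑ j ∈ range i, lam j)) * (1 - w * δ) * x q :=
          abs_relaxed_mulVec_le hB hBx (by positivity) ih hw0 hw1 q
      _ ≤ m * Real.exp (-(pmin * δ * ∑ j ∈ range i, lam j))
            * Real.exp (-(pmin * δ * lam i)) * x q := by
          have := hx q
          gcongr
      _ = m * Real.exp (-(pmin * δ * ∑ j ∈ range (i + 1), lam j)) * x q := by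
          rw [sum_range_succ, mul_add, neg_add, Real.exp_add]; ring

end ExpectedQLearning

theorem expected_q_values_converge_scalar_general {n : ℕ}
    (B : Matrix (Fin n) (Fin n) ℝ) (hB : ∀ i j, 0 ≤ B i j)
    (hpow : ∀ i j, Tendsto (fun k => (B ^ k) i j) atTop (nhds 0))
    (c : Fin n → ℝ) (hc : ∀ i, 0 < c i)
    (cstar : Fin n → ℝ) (hcstar : cstar = B.mulVec cstar + c)
    (lam : ℕ → ℝ) (hlam : ∀ i, 0 ≤ lam i ∧ lam i ≤ 1)
    (hlamdiv : Tendsto (fun N => ∑ i ∈ Finset.range N, lam i) atTop atTop)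
    (p : Fin n → ℝ) (hp : ∀ q, 0 < p q ∧ p q ≤ 1)
    (pmin : ℝ) (hpmin : 0 < pmin) (hppmin : ∀ q, pmin ≤ p q)
    (Q : ℕ → Fin n → ℝ)
    (hQ : ∀ i q, Q (i + 1) q
      = (1 - lam i * p q) * Q i q + lam i * p q * (B.mulVec (Q i) + c) q)
    (κ : ℝ) (hQ0 : Q 0 = κ • cstar) :
    ∀ q, Tendsto (fun i => Q i q) atTop (nhds (cstar q)) := by
  intro q
  have hcstar0 : 0 ≤ cstar := nonneg_of_eq_mulVec_add hB
    (tendsto_pi_nhds.2 fun i => tendsto_pi_nhds.2 (hpow i)) (fun i => (hc i).le) hcstar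
  obtain ⟨δ, hδ, hδc⟩ := exists_pos_smul_le hc cstar
  have hBc : B *ᵥ cstar ≤ (1 - δ) • cstar := fun i => by
    have hfix := congrFun hcstar i
    have hδi := hδc i
    simp only [Pi.add_apply, Pi.smul_apply, smul_eq_mul] at hfix hδi ⊢
    linarith
  have hbound := abs_sub_le_exp_neg_sum hB hcstar hcstar0 hδ.le hBc hlam
    (fun q => ⟨(hp q).1.le, (hp q).2⟩) hppmin hQ (abs_nonneg (κ - 1))
    (fun q => by simp [hQ0, ← sub_one_mul, abs_mul, abs_of_nonneg (hcstar0 q)])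
  have henv : Tendsto (fun i => |κ - 1| * Real.exp (-(pmin * δ * ∑ j ∈ range i, lam j))
      * cstar q) atTop (𝓝 0) := by
    have := Real.tendsto_exp_atBot.comp
      (tendsto_neg_atTop_atBot.comp (hlamdiv.const_mul_atTop (mul_pos hpmin hδ)))
    simpa using (this.const_mul |κ - 1|).mul_const (cstar q)
  exact tendsto_sub_nhds_zero_iff.1 (squeeze_zero_norm (fun i => hbound i q) henv)

/-- Lemma 4: if each entry is updated with probability at least `p_min > 0`,
the learning rates sum to infinity, and `Q 0 = κ • c*` for some `κ ≥ 0`, then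
the expected Q-learning iterates converge to the fixed point `c*`. -/
theorem expected_q_values_converge_scalar {n : ℕ}
    (B : Matrix (Fin n) (Fin n) ℝ) (hB : ∀ i j, 0 ≤ B i j)
    (hpow : ∀ i j, Tendsto (fun k => (B ^ k) i j) atTop (nhds 0))
    (c : Fin n → ℝ) (hc : ∀ i, 0 < c i)
    (cstar : Fin n → ℝ) (hcstar : cstar = B.mulVec cstar + c)
    (lam : ℕ → ℝ) (hlam : ∀ i, 0 ≤ lam i ∧ lam i ≤ 1)
    (hlamdiv : Tendsto (fun N => ∑ i ∈ Finset.range N, lam i) atTop atTop)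
    (p : Fin n → ℝ) (hp : ∀ q, 0 < p q ∧ p q ≤ 1)
    (pmin : ℝ) (hpmin : 0 < pmin) (hppmin : ∀ q, pmin ≤ p q)
    (Q : ℕ → Fin n → ℝ)
    (hQ : ∀ i q, Q (i + 1) q
      = (1 - lam i * p q) * Q i q + lam i * p q * (B.mulVec (Q i) + c) q)
    (κ : ℝ) (hκ : 0 ≤ κ) (hQ0 : Q 0 = κ • cstar) :
    ∀ q, Tendsto (fun i => Q i q) atTop (nhds (cstar q)) :=
  expected_q_values_converge_scalar_general B hB hpow c hc cstar hcstar lam hlam hlamdiv p hp pmin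
    hpmin hppmin Q hQ κ hQ0
end

section
/- Strict-improvement claim (key step in the proof of Theorem 5): if Q : Fin n → ℝ satisfies Q q ≥ 0 for all q and Q q' < c* q' for some q', then there exists a coordinate q with Q q < (B.mulVec Q + c) q and Q q < c* q; that is, any nonnegative vector lying strictly below the fixed point in some coordinate is strictly increased by the Bellman operator in some coordinate where it is still below the fixed point. -/
open Filter Matrix

/-- Strict-improvement claim (key step in the proof of Theorem 5): any
nonnegative vector lying strictly below the fixed point `c*` in some
coordinate is strictly increased by the Bellman operator in some coordinate
where it is still below `c*`. -/
theorem strict_improvement_below_fixed_point {n : ℕ}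
    (B : Matrix (Fin n) (Fin n) ℝ) (hB : ∀ i j, 0 ≤ B i j)
    (hpow : ∀ i j, Tendsto (fun k => (B ^ k) i j) atTop (nhds 0))
    (c : Fin n → ℝ) (hc : ∀ i, 0 < c i)
    (cstar : Fin n → ℝ) (hcstar : cstar = B.mulVec cstar + c)
    (Q : Fin n → ℝ) (hQ : ∀ q, 0 ≤ Q q)
    (q' : Fin n) (hq' : Q q' < cstar q') :
    ∃ q, Q q < (B.mulVec Q + c) q ∧ Q q < cstar q := by
  by_contra h
  push_neg at h
  -- h : ∀ q, Q q < (B.mulVec Q + c) q → cstar q ≤ Q q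
  set d : Fin n → ℝ := fun q => max (cstar q - Q q) 0 with hd
  have hd0 : ∀ q, 0 ≤ d q := fun q => le_max_right _ _
  have hdle : ∀ q, cstar q - Q q ≤ d q := fun q => le_max_left _ _
  -- key: d ≤ B.mulVec d pointwise
  have key : ∀ q, d q ≤ B.mulVec d q := by
    intro q
    by_cases hcase : cstar q - Q q ≤ 0
    · have : d q = 0 := max_eq_right hcase
      rw [this]
      simp only [Matrix.mulVec, dotProduct]
      exact Finset.sum_nonneg fun j _ => mul_nonneg (hB q j) (hd0 j)
    · push_neg at hcase
      have hQlt : Q q < cstar q := by linarith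
      have hBQ : (B.mulVec Q + c) q ≤ Q q := by
        by_contra hcon
        push_neg at hcon
        exact absurd (h q hcon) (not_le.mpr hQlt)
      have hdq : d q = cstar q - Q q := max_eq_left hcase.le
      have hcq : cstar q = (B.mulVec cstar + c) q := by rw [← hcstar]
      have h1 : d q ≤ B.mulVec cstar q - B.mulVec Q q := by
        have := hBQ
        simp only [Pi.add_apply] at this hcq
        rw [hdq]; linarith
      calc d q ≤ B.mulVec cstar q - B.mulVec Q q := h1
        _ = ∑ j, B q j * (cstar j - Q j) := by
            simp [Matrix.mulVec, dotProduct, ← Finset.sum_sub_distrib, mul_sub]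
        _ ≤ ∑ j, B q j * d j :=
            Finset.sum_le_sum fun j _ => mul_le_mul_of_nonneg_left (hdle j) (hB q j)
        _ = B.mulVec d q := rfl
  -- powers of B have nonnegative entries
  have hBk : ∀ k i j, 0 ≤ (B ^ k) i j := by
    intro k
    induction k with
    | zero => intro i j; simp [Matrix.one_apply]; positivity
    | succ k ih =>
      intro i j
      rw [pow_succ, Matrix.mul_apply]
      exact Finset.sum_nonneg fun l _ => mul_nonneg (ih i l) (hB l j)
  -- iterate: d ≤ B^k.mulVec d
  have iter : ∀ k q, d q ≤ (B ^ k).mulVec d q := by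
    intro k
    induction k with
    | zero => intro q; simp [Matrix.mulVec_one]
    | succ k ih =>
      intro q
      have h1 : B.mulVec d q ≤ B.mulVec ((B ^ k).mulVec d) q := by
        simp only [Matrix.mulVec, dotProduct]
        exact Finset.sum_le_sum fun j _ => mul_le_mul_of_nonneg_left (ih j) (hB q j)
      have h2 : (B ^ (k + 1)).mulVec d q = B.mulVec ((B ^ k).mulVec d) q := by
        rw [pow_succ', Matrix.mulVec_mulVec]
      rw [h2]
      exact le_trans (key q) h1
  -- limit: (B^k.mulVec d) q' → 0
  have hlim : Tendsto (fun k => (B ^ k).mulVec d q') atTop (nhds 0) := by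
    have : Tendsto (fun k => ∑ j, (B ^ k) q' j * d j) atTop (nhds (∑ j : Fin n, 0)) := by
      refine tendsto_finset_sum _ fun j _ => ?_
      simpa using (hpow q' j).mul_const (d j)
    simpa [Matrix.mulVec, dotProduct] using this
  have hpos : 0 < d q' := lt_max_of_lt_left (by linarith)
  have : d q' ≤ 0 := ge_of_tendsto' hlim (fun k => iter k q')
  linarith
end
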